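/- Let f* : ℝ → ℂ be continuous, 2π-periodic with |f*(t)| ≤ 1 for all t, and let f = P_α[f*]. If 0 < α ≤ 1, then for every z ∈ 𝔻, |f(z) − ((1−|z|²)^{α+1}/(1+|z|²))·f(0)| ≤ 2^{α+1}·((2/π)·arctan|z| + |z|^α). If α ≥ 1, then for every z ∈ 𝔻, |f(z) − ((1−|z|²)^{α+1}/(1+|z|²))·f(0)| ≤ 2^{α+1}·((2/π)·arctan|z| + α·|z|). -/

import Mathlib

open Complex MeasureTheory Real Set

noncomputable section

/-- Wirtinger derivative `∂f = (f_x - i f_y)/2` of a function `f : ℂ → ℂ`,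
viewed as a real-differentiable map. -/
def wdz (f : ℂ → ℂ) (z : ℂ) : ℂ :=
  (fderiv ℝ f z 1 - Complex.I * fderiv ℝ f z Complex.I) / 2

/-- Wirtinger derivative `∂̄f = (f_x + i f_y)/2`. -/
def wdzbar (f : ℂ → ℂ) (z : ℂ) : ℂ :=
  (fderiv ℝ f z 1 + Complex.I * fderiv ℝ f z Complex.I) / 2

/-- The `α`-harmonic Poisson kernel
`P_α(z) = (1-|z|²)^{α+1} / ((1-z)(1-z̄)^{α+1})` (principal powers). -/
def poissonKernelAlpha (α : ℝ) (z : ℂ) : ℂ :=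
  (((1 - ‖z‖ ^ 2) ^ (α + 1) : ℝ) : ℂ) /
    ((1 - z) * (1 - (starRingEnd ℂ) z) ^ ((α : ℂ) + 1))

/-- The `α`-harmonic extension `P_α[F](z) = (1/2π) ∫₀^{2π} P_α(z e^{-it}) F(t) dt`. -/
def poissonExt (α : ℝ) (F : ℝ → ℂ) (z : ℂ) : ℂ :=
  (1 / (2 * Real.pi) : ℂ) *
    ∫ t in (0:ℝ)..(2 * Real.pi), poissonKernelAlpha α (z * Complex.exp (-Complex.I * t)) * F t

/-- The angular derivative `∂_θ f(z) = i (z ∂f(z) - z̄ ∂̄f(z))`. -/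
def angularDeriv (f : ℂ → ℂ) (z : ℂ) : ℂ :=
  Complex.I * (z * wdz f z - (starRingEnd ℂ) z * wdzbar f z)

/-- The integral mean `M_p(r,g) = ((1/2π) ∫₀^{2π} |g(r e^{iθ})|^p dθ)^{1/p}`. -/
def Mp (p : ℝ) (r : ℝ) (g : ℂ → ℂ) : ℝ :=
  ((1 / (2 * Real.pi)) *
      ∫ θ in (0:ℝ)..(2 * Real.pi),
        ‖g ((r : ℂ) * Complex.exp (Complex.I * θ))‖ ^ p) ^ (1 / p)

/-- The boundary `L^p` norm `‖G‖_{L^p} = ((1/2π) ∫₀^{2π} |G(t)|^p dt)^{1/p}`. -/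
def lpNormBdry (p : ℝ) (G : ℝ → ℂ) : ℝ :=
  ((1 / (2 * Real.pi)) * ∫ t in (0:ℝ)..(2 * Real.pi), ‖G t‖ ^ p) ^ (1 / p)

/-- The constant `c_α = Γ(α+1)/Γ(α/2+1)²`. -/
def cAlpha (α : ℝ) : ℝ := Real.Gamma (α + 1) / (Real.Gamma (α / 2 + 1)) ^ 2

/-- `I_α(r) = (1/2π) ∫₀^{2π} (1-r²)^α / |1 - r e^{it}|^{α+1} dt`. -/
def Ialpha (α r : ℝ) : ℝ :=
  (1 / (2 * Real.pi)) *
    ∫ t in (0:ℝ)..(2 * Real.pi),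
      (1 - r ^ 2) ^ α / (‖1 - (r : ℂ) * Complex.exp (Complex.I * t)‖) ^ (α + 1)

/-- `g_α(z) = ((1-|z|²)/(1-z̄))^α` (principal complex power). -/
def gAlpha (α : ℝ) (z : ℂ) : ℂ :=
  ((((1 - ‖z‖ ^ 2 : ℝ)) : ℂ) / (1 - (starRingEnd ℂ) z)) ^ (α : ℂ)

end

/-!
Write `z e^{-it} = r e^{is}` with `s = arg z - t`. Since `(1 - w)(1 - w̄) = |1 - w|²`, the kernel
factors as `P_α(w) = (1 - r²)^α (1 - w̄)^{-α} P_r(s)`, where `P_r` is the classical Poisson kernel,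
and `|(1 - w̄)^{-α} - 1| ≤ (1 - r)^{-α} - 1` (the Taylor coefficients of `(1 - u)^{-α}` are
nonnegative). Splitting off `(1 - r²)^{α+1}/(1 + r²) = (1 - r²)^α · (1 - r²)/(1 + r²)` gives
`|P_α(w) - (1 - r²)^{α+1}/(1 + r²)| ≤ (1 + r)^α (|P_r(s) - (1 - r²)/(1 + r²)| + 1 - (1 - r)^α)`.
The first term integrates to `8 arctan r` over a period: `(1 - r²)/(1 + r²)` is the value of `P_r`
where `cos s` changes sign, and `s + 2 arctan (r sin s / (1 - r cos s))` is a primitive of `P_r`.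
Finally `1 - (1 - r)^α ≤ r^α` by subadditivity of `x ↦ x^α` when `α ≤ 1`, and `≤ α r` by
Bernoulli's inequality when `α ≥ 1`.
-/

lemma one_sub_mem_slitPlane {u : ℂ} (hu : ‖u‖ < 1) : 1 - u ∈ slitPlane := by
  simpa [sub_eq_add_neg] using mem_slitPlane_of_norm_lt_one (z := -u) (by rwa [norm_neg])

-- Along `s ↦ s * u`, the derivative of `(1 - s * u) ^ (-α)` is dominated by that of its
-- radial majorant `(1 - s * ‖u‖) ^ (-α)`.
lemma norm_one_sub_cpow_neg_sub_one_le {α : ℝ} (hα : 0 ≤ α) {u : ℂ} (hu : ‖u‖ < 1) :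
    ‖(1 - u) ^ (-(α : ℂ)) - 1‖ ≤ (1 - ‖u‖) ^ (-α) - 1 := by
  set r := ‖u‖
  have hr : 0 ≤ r := norm_nonneg u
  have hsr : ∀ s ∈ Icc (0 : ℝ) 1, 0 < 1 - s * r := fun s hs => by nlinarith [hs.1, hs.2]
  have hsu : ∀ s ∈ Icc (0 : ℝ) 1, ‖(s : ℂ) * u‖ = s * r := fun s hs => by
    rw [norm_mul, norm_real, Real.norm_of_nonneg hs.1]
  have hf : ∀ s ∈ Icc (0 : ℝ) 1, HasDerivAt (fun s : ℝ => (1 - (s : ℂ) * u) ^ (-(α : ℂ)) - 1)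
      (-(α : ℂ) * (1 - (s : ℂ) * u) ^ (-(α : ℂ) - 1) * (-u)) s := fun s hs => by
    have hlin : HasDerivAt (fun ζ : ℂ => 1 - ζ * u) (-u) (s : ℂ) := by
      simpa using ((hasDerivAt_id (s : ℂ)).mul_const u).const_sub 1
    have hslit := one_sub_mem_slitPlane ((hsu s hs).trans_lt (by linarith [hsr s hs]))
    exact ((hlin.cpow_const hslit).comp_ofReal).sub_const 1
  have hB : ∀ s ∈ Icc (0 : ℝ) 1, HasDerivAt (fun s : ℝ => (1 - s * r) ^ (-α) - 1)
      (α * (1 - s * r) ^ (-α - 1) * r) s := fun s hs => by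
    have hlin : HasDerivAt (fun s : ℝ => 1 - s * r) (-r) s := by
      simpa using ((hasDerivAt_id s).mul_const r).const_sub 1
    exact ((hlin.rpow_const (p := -α) (Or.inl (hsr s hs).ne')).sub_const 1).congr_deriv
      (by ring)
  have hbound : ∀ s ∈ Ico (0 : ℝ) 1,
      ‖-(α : ℂ) * (1 - (s : ℂ) * u) ^ (-(α : ℂ) - 1) * (-u)‖ ≤ α * (1 - s * r) ^ (-α - 1) * r := by
    intro s hs
    have hs' := Ico_subset_Icc_self hs
    have hexp : -(α : ℂ) - 1 = ((-α - 1 : ℝ) : ℂ) := by push_cast; ring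
    have hle : 1 - s * r ≤ ‖1 - (s : ℂ) * u‖ := by
      simpa only [norm_one, hsu s hs'] using norm_sub_norm_le (1 : ℂ) ((s : ℂ) * u)
    rw [hexp, norm_mul, norm_mul, norm_neg, norm_neg, norm_real, Real.norm_of_nonneg hα,
      norm_cpow_real]
    exact mul_le_mul_of_nonneg_right (mul_le_mul_of_nonneg_left
      (Real.rpow_le_rpow_of_nonpos (hsr s hs') hle (by linarith)) hα) hr
  have := image_norm_le_of_norm_deriv_right_le_deriv_boundary'
    (fun s hs => (hf s hs).continuousAt.continuousWithinAt)
    (fun s hs => (hf s (Ico_subset_Icc_self hs)).hasDerivWithinAt)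
    (by simp) (fun s hs => (hB s hs).continuousAt.continuousWithinAt)
    (fun s hs => (hB s (Ico_subset_Icc_self hs)).hasDerivWithinAt) hbound
    (right_mem_Icc.2 zero_le_one)
  simpa using this

lemma one_sub_one_sub_rpow_le_rpow {α r : ℝ} (hα0 : 0 ≤ α) (hα1 : α ≤ 1) (hr0 : 0 ≤ r)
    (hr1 : r ≤ 1) : 1 - (1 - r) ^ α ≤ r ^ α := by
  have := Real.rpow_add_le_add_rpow (sub_nonneg.2 hr1) hr0 hα0 hα1
  rw [sub_add_cancel, Real.one_rpow] at this
  linarith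

lemma one_sub_one_sub_rpow_le_mul {α r : ℝ} (hα : 1 ≤ α) (hr : r ≤ 1) :
    1 - (1 - r) ^ α ≤ α * r := by
  have := one_add_mul_self_le_rpow_one_add (s := -r) (by linarith) hα
  rw [← sub_eq_add_neg] at this
  linarith

noncomputable def diskPoissonKernel (r s : ℝ) : ℝ := (1 - r ^ 2) / (1 - 2 * r * Real.cos s + r ^ 2)

section diskPoissonKernel

variable {r : ℝ}

lemma one_sub_two_mul_cos_add_sq_pos (hr0 : 0 ≤ r) (hr1 : r < 1) (s : ℝ) :
    0 < 1 - 2 * r * Real.cos s + r ^ 2 := by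
  nlinarith [Real.cos_le_one s]

lemma normSq_one_sub_ofReal_mul_exp (r s : ℝ) :
    normSq (1 - r * exp (s * I)) = 1 - 2 * r * Real.cos s + r ^ 2 := by
  simp only [exp_mul_I, normSq_apply, sub_re, one_re, mul_re, ofReal_re, add_re, cos_ofReal_re,
    sin_ofReal_re, I_re, mul_zero, sin_ofReal_im, I_im, mul_one, sub_self, add_zero, ofReal_im,
    add_im, cos_ofReal_im, mul_im, zero_add, zero_mul, sub_zero, sub_im, one_im, zero_sub, mul_neg,
    neg_mul, neg_neg]
  nlinarith [Real.sin_sq_add_cos_sq s]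

lemma hasDerivAt_arctan_primitive_diskPoissonKernel (hr0 : 0 ≤ r) (hr1 : r < 1) (s : ℝ) :
    HasDerivAt (fun s => s + 2 * Real.arctan (r * Real.sin s / (1 - r * Real.cos s)))
      (diskPoissonKernel r s) s := by
  have hc : 0 < 1 - r * Real.cos s := by nlinarith [Real.cos_le_one s]
  have hD := one_sub_two_mul_cos_add_sq_pos hr0 hr1 s
  have hquot : HasDerivAt (fun s => r * Real.sin s / (1 - r * Real.cos s))
      ((r * Real.cos s * (1 - r * Real.cos s) - r * Real.sin s * (r * Real.sin s)) /
        (1 - r * Real.cos s) ^ 2) s :=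
    ((Real.hasDerivAt_sin s).const_mul r).div
      (by simpa using ((Real.hasDerivAt_cos s).const_mul r).const_sub 1) hc.ne'
  refine ((hasDerivAt_id s).add
    ((Real.hasDerivAt_arctan _).comp s hquot |>.const_mul 2)).congr_deriv ?_
  have hsin := Real.sin_sq_add_cos_sq s
  rw [diskPoissonKernel, eq_div_iff hD.ne']
  field_simp
  linear_combination -2 * r ^ 2 * (1 - r * Real.cos s) * hsin

lemma continuous_diskPoissonKernel (hr0 : 0 ≤ r) (hr1 : r < 1) :
    Continuous (diskPoissonKernel r) :=
  continuous_const.div (by fun_prop) fun s => (one_sub_two_mul_cos_add_sq_pos hr0 hr1 s).ne'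

lemma le_diskPoissonKernel_of_cos_nonneg (hr0 : 0 ≤ r) (hr1 : r < 1) {s : ℝ}
    (hs : 0 ≤ Real.cos s) : (1 - r ^ 2) / (1 + r ^ 2) ≤ diskPoissonKernel r s :=
  div_le_div_of_nonneg_left (by nlinarith) (one_sub_two_mul_cos_add_sq_pos hr0 hr1 s)
    (by nlinarith)

lemma diskPoissonKernel_le_of_cos_nonpos (hr0 : 0 ≤ r) (hr1 : r < 1) {s : ℝ}
    (hs : Real.cos s ≤ 0) : diskPoissonKernel r s ≤ (1 - r ^ 2) / (1 + r ^ 2) :=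
  div_le_div_of_nonneg_left (by nlinarith) (by positivity) (by nlinarith)

lemma integral_abs_diskPoissonKernel_sub (hr0 : 0 ≤ r) (hr1 : r < 1) :
    ∫ s in -(π / 2)..3 * π / 2, |diskPoissonKernel r s - (1 - r ^ 2) / (1 + r ^ 2)| =
      8 * Real.arctan r := by
  set c₀ := (1 - r ^ 2) / (1 + r ^ 2)
  set G := fun s => s + 2 * Real.arctan (r * Real.sin s / (1 - r * Real.cos s))
  have hcont := continuous_diskPoissonKernel hr0 hr1
  have hG : ∀ a b, ∫ s in a..b, diskPoissonKernel r s = G b - G a := fun a b =>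
    intervalIntegral.integral_eq_sub_of_hasDerivAt
      (fun s _ => hasDerivAt_arctan_primitive_diskPoissonKernel hr0 hr1 s)
      (hcont.intervalIntegrable a b)
  have hpos : ∫ s in -(π / 2)..π / 2, |diskPoissonKernel r s - c₀| =
      ∫ s in -(π / 2)..π / 2, (diskPoissonKernel r s - c₀) := by
    refine intervalIntegral.integral_congr fun s hs => abs_of_nonneg ?_
    rw [uIcc_of_le (by linarith [pi_pos])] at hs
    linarith [le_diskPoissonKernel_of_cos_nonneg hr0 hr1 (Real.cos_nonneg_of_mem_Icc hs)]
  have hneg : ∫ s in π / 2..3 * π / 2, |diskPoissonKernel r s - c₀| =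
      ∫ s in π / 2..3 * π / 2, (c₀ - diskPoissonKernel r s) := by
    refine intervalIntegral.integral_congr fun s hs => ?_
    rw [uIcc_of_le (by linarith [pi_pos])] at hs
    have hcos : Real.cos s ≤ 0 := Real.cos_nonpos_of_pi_div_two_le_of_le hs.1 (by linarith [hs.2])
    rw [abs_of_nonpos (by linarith [diskPoissonKernel_le_of_cos_nonpos hr0 hr1 hcos]), neg_sub]
  have hG₁ : G (π / 2) = π / 2 + 2 * Real.arctan r := by simp [G]
  have hG₀ : G (-(π / 2)) = -(π / 2) - 2 * Real.arctan r := by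
    simp only [G, Real.sin_neg, Real.cos_neg, Real.sin_pi_div_two, Real.cos_pi_div_two,
      mul_neg, mul_one, mul_zero, sub_zero, div_one, arctan_neg]
    ring
  have hG₂ : G (3 * π / 2) = 3 * π / 2 - 2 * Real.arctan r := by
    rw [show 3 * π / 2 = π / 2 + π by ring]
    simp only [G, Real.sin_add_pi, Real.cos_add_pi, Real.sin_pi_div_two, Real.cos_pi_div_two,
      neg_zero, mul_neg, mul_one, mul_zero, sub_zero, div_one, arctan_neg]
    ring
  have habs : Continuous fun s => |diskPoissonKernel r s - c₀| := by fun_prop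
  rw [← intervalIntegral.integral_add_adjacent_intervals (b := π / 2)
      (habs.intervalIntegrable _ _) (habs.intervalIntegrable _ _), hpos, hneg,
    intervalIntegral.integral_sub (hcont.intervalIntegrable _ _) intervalIntegrable_const,
    intervalIntegral.integral_sub intervalIntegrable_const (hcont.intervalIntegrable _ _),
    hG, hG, hG₀, hG₁, hG₂, intervalIntegral.integral_const, intervalIntegral.integral_const,
    smul_eq_mul, smul_eq_mul]
  ring

lemma integral_abs_diskPoissonKernel_sub_comp_sub (hr0 : 0 ≤ r) (hr1 : r < 1) (θ : ℝ) :
    ∫ t in (0 : ℝ)..2 * π, |diskPoissonKernel r (θ - t) - (1 - r ^ 2) / (1 + r ^ 2)| =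
      8 * Real.arctan r := by
  have hper : Function.Periodic
      (fun s => |diskPoissonKernel r s - (1 - r ^ 2) / (1 + r ^ 2)|) (2 * π) := fun s => by
    simp only [diskPoissonKernel, Real.cos_add_two_pi]
  have hshift := hper.intervalIntegral_add_eq (θ - 2 * π) (-(π / 2))
  rw [sub_add_cancel, show -(π / 2) + 2 * π = 3 * π / 2 by ring] at hshift
  rw [intervalIntegral.integral_comp_sub_left
      (fun s => |diskPoissonKernel r s - (1 - r ^ 2) / (1 + r ^ 2)|) θ, sub_zero, hshift]
  exact integral_abs_diskPoissonKernel_sub hr0 hr1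

end diskPoissonKernel

lemma poissonKernelAlpha_ofReal_mul_exp {α r : ℝ} (hr0 : 0 ≤ r) (hr1 : r < 1) (s : ℝ) :
    poissonKernelAlpha α (r * exp (s * I)) =
      (((1 - r ^ 2) ^ α : ℝ) : ℂ) * (1 - starRingEnd ℂ (r * exp (s * I))) ^ (-(α : ℂ)) *
        diskPoissonKernel r s := by
  set w : ℂ := r * exp (s * I)
  have hw : ‖w‖ = r := by simp [w, abs_of_nonneg hr0]
  have hu : 1 - starRingEnd ℂ w ≠ 0 :=
    slitPlane_ne_zero (one_sub_mem_slitPlane (by rwa [norm_conj, hw]))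
  have hD : (1 - w) * (1 - starRingEnd ℂ w) = ((1 - 2 * r * Real.cos s + r ^ 2 : ℝ) : ℂ) := by
    rw [← normSq_one_sub_ofReal_mul_exp, ← mul_conj, map_sub, map_one]
  rw [poissonKernelAlpha, hw, cpow_add _ _ hu, cpow_one, cpow_neg, diskPoissonKernel,
    Real.rpow_add (by nlinarith), Real.rpow_one, mul_left_comm, hD, ofReal_mul, ofReal_div]
  ring

lemma norm_poissonKernelAlpha_ofReal_mul_exp_sub_le {α r : ℝ} (hα : 0 ≤ α) (hr0 : 0 ≤ r)
    (hr1 : r < 1) (s : ℝ) :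
    ‖poissonKernelAlpha α (r * exp (s * I)) - (((1 - r ^ 2) ^ (α + 1) / (1 + r ^ 2) : ℝ) : ℂ)‖ ≤
      (1 + r) ^ α * (|diskPoissonKernel r s - (1 - r ^ 2) / (1 + r ^ 2)| + (1 - (1 - r) ^ α)) := by
  rw [poissonKernelAlpha_ofReal_mul_exp hr0 hr1, Real.rpow_add (by nlinarith), Real.rpow_one]
  set u := starRingEnd ℂ (r * exp (s * I))
  have hu : ‖u‖ = r := by simp [u, abs_of_nonneg hr0]
  set A := (1 - r ^ 2) ^ α with hA_def
  set c₀ := (1 - r ^ 2) / (1 + r ^ 2) with hc₀_def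
  set K := diskPoissonKernel r s
  set v := (1 - u) ^ (-(α : ℂ))
  have hv : ‖v - 1‖ ≤ (1 - r) ^ (-α) - 1 := hu ▸ norm_one_sub_cpow_neg_sub_one_le hα (hu ▸ hr1)
  have hv' : ‖v‖ ≤ (1 - r) ^ (-α) := by linarith [norm_sub_norm_le v 1, norm_one (α := ℂ)]
  have hc₀ : |c₀| ≤ 1 := by
    rw [hc₀_def, abs_le, le_div_iff₀ (by positivity), div_le_iff₀ (by positivity)]
    constructor <;> nlinarith
  have hA0 : 0 ≤ A := Real.rpow_nonneg (by nlinarith) α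
  have hA : A = (1 + r) ^ α * (1 - r) ^ α := by
    rw [hA_def, ← Real.mul_rpow (by linarith) (by linarith)]
    ring_nf
  have hA' : A * (1 - r) ^ (-α) = (1 + r) ^ α := by
    rw [hA, Real.rpow_neg (by linarith), mul_assoc, mul_inv_cancel₀ (by positivity), mul_one]
  have hsplit : (A : ℂ) * v * K - ((A * (1 - r ^ 2) / (1 + r ^ 2) : ℝ) : ℂ) =
      A * (v * ((K - c₀ : ℝ) : ℂ) + c₀ * (v - 1)) := by
    rw [mul_div_assoc, ← hc₀_def]
    push_cast
    ring
  calc _ = A * ‖v * ((K - c₀ : ℝ) : ℂ) + c₀ * (v - 1)‖ := by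
        rw [hsplit, norm_mul, norm_real, Real.norm_of_nonneg hA0]
    _ ≤ A * (‖v‖ * |K - c₀| + ‖v - 1‖) := by
        refine mul_le_mul_of_nonneg_left ((norm_add_le _ _).trans ?_) hA0
        rw [norm_mul, norm_mul, norm_real, norm_real, Real.norm_eq_abs, Real.norm_eq_abs]
        gcongr
        exact mul_le_of_le_one_left (norm_nonneg _) hc₀
    _ ≤ A * ((1 - r) ^ (-α) * |K - c₀| + ((1 - r) ^ (-α) - 1)) := by gcongr
    _ = (1 + r) ^ α * (|K - c₀| + (1 - (1 - r) ^ α)) := by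
        rw [mul_add, ← mul_assoc, hA', mul_sub, hA', mul_one, hA]
        ring

lemma continuousOn_poissonKernelAlpha (α : ℝ) :
    ContinuousOn (poissonKernelAlpha α) (Metric.ball 0 1) := by
  intro w hw
  rw [mem_ball_zero_iff] at hw
  have hslit : 1 - starRingEnd ℂ w ∈ slitPlane := one_sub_mem_slitPlane (by rwa [norm_conj])
  have hne : (1 - w) * (1 - starRingEnd ℂ w) ^ ((α : ℂ) + 1) ≠ 0 :=
    mul_ne_zero (slitPlane_ne_zero (one_sub_mem_slitPlane hw))
      (by simp [cpow_eq_zero_iff, slitPlane_ne_zero hslit])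
  have hnum : ContinuousAt (fun w : ℂ => (1 - ‖w‖ ^ 2) ^ (α + 1)) w :=
    ContinuousAt.rpow_const (by fun_prop) (Or.inl (by nlinarith [norm_nonneg w]))
  have hden : ContinuousAt (fun w : ℂ => (1 - starRingEnd ℂ w) ^ ((α : ℂ) + 1)) w :=
    ContinuousAt.cpow (by fun_prop) continuousAt_const hslit
  exact ((continuous_ofReal.continuousAt.comp hnum).div
    ((continuousAt_const.sub continuousAt_id).mul hden) hne).continuousWithinAt

lemma poissonExt_zero (α : ℝ) (F : ℝ → ℂ) :
    poissonExt α F 0 = (1 / (2 * π) : ℂ) * ∫ t in (0 : ℝ)..2 * π, F t := by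
  simp [poissonExt, poissonKernelAlpha]

lemma mul_exp_neg_I_mul (z : ℂ) (t : ℝ) :
    z * exp (-I * t) = ‖z‖ * exp (↑(arg z - t) * I) := by
  conv_lhs => rw [← norm_mul_exp_arg_mul_I z]
  rw [mul_assoc, ← Complex.exp_add]
  congr 2
  push_cast
  ring

lemma continuous_poissonKernelAlpha_mul_exp (α : ℝ) {z : ℂ} (hz : ‖z‖ < 1) :
    Continuous fun t : ℝ => poissonKernelAlpha α (z * exp (-I * t)) :=
  (continuousOn_poissonKernelAlpha α).comp_continuous (by fun_prop) fun t => by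
    rwa [mem_ball_zero_iff, mul_exp_neg_I_mul, norm_mul, norm_exp_ofReal_mul_I, norm_real,
      norm_norm, mul_one]

lemma poissonExt_sub_mul_poissonExt_zero {α : ℝ} {F : ℝ → ℂ} (hF : Continuous F) {z : ℂ}
    (hz : ‖z‖ < 1) (c : ℂ) :
    poissonExt α F z - c * poissonExt α F 0 = (1 / (2 * π) : ℂ) *
      ∫ t in (0 : ℝ)..2 * π, (poissonKernelAlpha α (z * exp (-I * t)) - c) * F t := by
  rw [poissonExt_zero, poissonExt, mul_left_comm c, ← intervalIntegral.integral_const_mul c,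
    ← mul_sub]
  simp_rw [sub_mul]
  exact congrArg _ (intervalIntegral.integral_sub
    ((continuous_poissonKernelAlpha_mul_exp α hz |>.mul hF).intervalIntegrable _ _)
    ((continuous_const.mul hF).intervalIntegrable _ _)).symm

lemma norm_integral_poissonKernelAlpha_sub_mul_le {α : ℝ} (hα : 0 ≤ α) {F : ℝ → ℂ}
    (hF1 : ∀ t, ‖F t‖ ≤ 1) {z : ℂ} (hz : ‖z‖ < 1) :
    ‖∫ t in (0 : ℝ)..2 * π, (poissonKernelAlpha α (z * exp (-I * t)) -
        (((1 - ‖z‖ ^ 2) ^ (α + 1) / (1 + ‖z‖ ^ 2) : ℝ) : ℂ)) * F t‖ ≤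
      (1 + ‖z‖) ^ α * (8 * Real.arctan ‖z‖ + 2 * π * (1 - (1 - ‖z‖) ^ α)) := by
  set r := ‖z‖
  have hr0 : 0 ≤ r := norm_nonneg z
  have hK : Continuous fun t => |diskPoissonKernel r (arg z - t) - (1 - r ^ 2) / (1 + r ^ 2)| :=
    (continuous_diskPoissonKernel hr0 hz |>.comp (continuous_sub_left _)
      |>.sub continuous_const |>.abs)
  have hbound : ∀ t : ℝ, ‖(poissonKernelAlpha α (z * exp (-I * t)) -
      (((1 - r ^ 2) ^ (α + 1) / (1 + r ^ 2) : ℝ) : ℂ)) * F t‖ ≤ (1 + r) ^ α *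
        (|diskPoissonKernel r (arg z - t) - (1 - r ^ 2) / (1 + r ^ 2)| + (1 - (1 - r) ^ α)) :=
    fun t => by
      rw [norm_mul, mul_exp_neg_I_mul]
      exact (mul_le_of_le_one_right (norm_nonneg _) (hF1 t)).trans
        (norm_poissonKernelAlpha_ofReal_mul_exp_sub_le hα hr0 hz _)
  refine (intervalIntegral.norm_integral_le_of_norm_le (by positivity)
    (ae_of_all _ fun t _ => hbound t) ((continuous_const.mul
      (hK.add continuous_const)).intervalIntegrable _ _)).trans_eq ?_
  rw [intervalIntegral.integral_const_mul,
    intervalIntegral.integral_add (hK.intervalIntegrable _ _) intervalIntegrable_const,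
    integral_abs_diskPoissonKernel_sub_comp_sub hr0 hz, intervalIntegral.integral_const,
    smul_eq_mul, sub_zero]

lemma norm_poissonExt_sub_le {α : ℝ} (hα : 0 ≤ α) {F : ℝ → ℂ} (hF : Continuous F)
    (hF1 : ∀ t, ‖F t‖ ≤ 1) {z : ℂ} (hz : ‖z‖ < 1) :
    ‖poissonExt α F z -
        (((1 - ‖z‖ ^ 2) ^ (α + 1) / (1 + ‖z‖ ^ 2) : ℝ) : ℂ) * poissonExt α F 0‖ ≤
      2 ^ (α + 1) * (2 / π * Real.arctan ‖z‖ + (1 - (1 - ‖z‖) ^ α)) := by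
  have hm : 0 ≤ 1 - (1 - ‖z‖) ^ α :=
    sub_nonneg.2 (Real.rpow_le_one (by linarith) (by linarith [norm_nonneg z]) hα)
  have harctan : 0 ≤ 4 / π * Real.arctan ‖z‖ :=
    mul_nonneg (by positivity) (Real.arctan_nonneg.2 (norm_nonneg z))
  have hnorm : ‖(1 / (2 * π) : ℂ)‖ = 1 / (2 * π) := by
    rw [← ofReal_ofNat, ← ofReal_mul, ← ofReal_one, ← ofReal_div, norm_real,
      Real.norm_of_nonneg (by positivity)]
  rw [poissonExt_sub_mul_poissonExt_zero hF hz, norm_mul, hnorm]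
  calc _ ≤ 1 / (2 * π) *
        ((1 + ‖z‖) ^ α * (8 * Real.arctan ‖z‖ + 2 * π * (1 - (1 - ‖z‖) ^ α))) := by
        gcongr
        exact norm_integral_poissonKernelAlpha_sub_mul_le hα hF1 hz
    _ = (1 + ‖z‖) ^ α * (4 / π * Real.arctan ‖z‖ + (1 - (1 - ‖z‖) ^ α)) := by
        field_simp
        ring
    _ ≤ 2 ^ α * (4 / π * Real.arctan ‖z‖ + 2 * (1 - (1 - ‖z‖) ^ α)) :=
        mul_le_mul (Real.rpow_le_rpow (by positivity) (by linarith) hα) (by linarith)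
          (by positivity) (by positivity)
    _ = 2 ^ (α + 1) * (2 / π * Real.arctan ‖z‖ + (1 - (1 - ‖z‖) ^ α)) := by
        rw [Real.rpow_add_one two_ne_zero]
        ring

theorem schwarz_alpha_cor_general (α : ℝ) (fs : ℝ → ℂ) (hcont : Continuous fs)
    (hbd : ∀ t : ℝ, ‖fs t‖ ≤ 1) :
    (0 < α → α ≤ 1 →
        ∀ z ∈ Metric.ball (0 : ℂ) 1,
          ‖poissonExt α fs z -
              ((((1 - ‖z‖ ^ 2) ^ (α + 1) / (1 + ‖z‖ ^ 2) : ℝ)) : ℂ) *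
                poissonExt α fs 0‖ ≤
            (2 : ℝ) ^ (α + 1) *
              (2 / Real.pi * Real.arctan (‖z‖) + ‖z‖ ^ α)) ∧
      (1 ≤ α →
        ∀ z ∈ Metric.ball (0 : ℂ) 1,
          ‖poissonExt α fs z -
              ((((1 - ‖z‖ ^ 2) ^ (α + 1) / (1 + ‖z‖ ^ 2) : ℝ)) : ℂ) *
                poissonExt α fs 0‖ ≤
            (2 : ℝ) ^ (α + 1) *
              (2 / Real.pi * Real.arctan (‖z‖) + α * ‖z‖)) := by
  refine ⟨fun hα hα1 z hz => ?_, fun hα z hz => ?_⟩ <;> rw [mem_ball_zero_iff] at hz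
  · refine (norm_poissonExt_sub_le hα.le hcont hbd hz).trans ?_
    gcongr
    exact one_sub_one_sub_rpow_le_rpow hα.le hα1 (norm_nonneg z) hz.le
  · refine (norm_poissonExt_sub_le (by linarith) hcont hbd hz).trans ?_
    gcongr
    exact one_sub_one_sub_rpow_le_mul hα hz.le

/-- Corollary of the Schwarz-type lemma: for `f = P_α[f*]` with `|f*| ≤ 1`,
if `0 < α ≤ 1` then `|f(z) - ((1-|z|²)^{α+1}/(1+|z|²)) f(0)| ≤ 2^{α+1}((2/π)arctan|z| + |z|^α)`,
and if `α ≥ 1` then `|f(z) - ((1-|z|²)^{α+1}/(1+|z|²)) f(0)| ≤ 2^{α+1}((2/π)arctan|z| + α|z|)`. -/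
theorem schwarz_alpha_cor (α : ℝ) (fs : ℝ → ℂ) (hcont : Continuous fs)
    (hper : Function.Periodic fs (2 * Real.pi)) (hbd : ∀ t : ℝ, ‖fs t‖ ≤ 1) :
    (0 < α → α ≤ 1 →
        ∀ z ∈ Metric.ball (0 : ℂ) 1,
          ‖poissonExt α fs z -
              ((((1 - ‖z‖ ^ 2) ^ (α + 1) / (1 + ‖z‖ ^ 2) : ℝ)) : ℂ) *
                poissonExt α fs 0‖ ≤
            (2 : ℝ) ^ (α + 1) *
              (2 / Real.pi * Real.arctan (‖z‖) + ‖z‖ ^ α)) ∧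
      (1 ≤ α →
        ∀ z ∈ Metric.ball (0 : ℂ) 1,
          ‖poissonExt α fs z -
              ((((1 - ‖z‖ ^ 2) ^ (α + 1) / (1 + ‖z‖ ^ 2) : ℝ)) : ℂ) *
                poissonExt α fs 0‖ ≤
            (2 : ℝ) ^ (α + 1) *
              (2 / Real.pi * Real.arctan (‖z‖) + α * ‖z‖)) :=
  schwarz_alpha_cor_general α fs hcont hbd
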